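/- The ratio of the spike-era length probability to the BKL era length probability tends to log 2/log 3: lim_{n→∞} L(n)/K(n) = log 2/log 3, where K(n) = log₂((n+1)/(n+2)) - log₂(n/(n+1)) and L(n) = log₃((2n+1)/(2n+3)) - log₃((2n-1)/(2n+1)). -/

import Mathlib

/-!
Combining each difference of logarithms into one logarithm gives
`K(n) = log₂(1 + 1/(n(n+2)))` and `L(n) = log₃(1 + 4/((2n-1)(2n+3)))`. Both arguments are
asymptotic to `1/n²`, and `log(1 + u) ~ u` as `u → 0`, so `K(n) ~ 1/(n² log 2)` and
`L(n) ~ 1/(n² log 3)`.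
-/

open Filter

/-- Khinchin's distribution `K(n) = log₂((n+1)/(n+2)) - log₂(n/(n+1))`. -/
noncomputable def khinchin (n : ℕ) : ℝ :=
  Real.logb 2 ((n + 1) / (n + 2)) - Real.logb 2 (n / (n + 1))

/-- Spike-era length distribution `L(n) = log₃((2n+1)/(2n+3)) - log₃((2n-1)/(2n+1))`. -/
noncomputable def spikeEraLen (n : ℕ) : ℝ :=
  Real.logb 3 ((2 * n + 1) / (2 * n + 3)) - Real.logb 3 (((2 * n : ℝ) - 1) / (2 * n + 1))

open Asymptotics Real Topology

theorem isEquivalent_log_one_add : (fun x : ℝ ↦ log (1 + x)) ~[𝓝 0] id := by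
  have h : HasDerivAt (fun x : ℝ ↦ log (1 + x)) 1 0 := by
    simpa using ((hasDerivAt_id (0 : ℝ)).const_add 1).log (by norm_num)
  rw [hasDerivAt_iff_isLittleO] at h
  simpa [IsEquivalent, Pi.sub_def, Function.id_def] using h

theorem Filter.Tendsto.isEquivalent_logb_one_add {α : Type*} {l : Filter α} {u : α → ℝ}
    (hu : Tendsto u l (𝓝 0)) (b : ℝ) :
    (fun a ↦ Real.logb b (1 + u a)) ~[l] fun a ↦ u a / Real.log b :=
  (isEquivalent_log_one_add.comp_tendsto hu).div IsEquivalent.refl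

theorem khinchin_eq_logb {n : ℕ} (hn : n ≠ 0) :
    khinchin n = logb 2 (1 + ((n : ℝ) * (n + 2))⁻¹) := by
  have hn : (n : ℝ) ≠ 0 := by exact_mod_cast hn
  rw [khinchin, ← logb_div (by positivity) (by positivity)]
  congr 1
  field_simp
  ring

theorem spikeEraLen_eq_logb {n : ℕ} (hn : n ≠ 0) :
    spikeEraLen n = logb 3 (1 + 4 / ((2 * n - 1) * (2 * n + 3))) := by
  have hn : (1 : ℝ) ≤ n := by exact_mod_cast Nat.one_le_iff_ne_zero.mpr hn
  have h : (2 * n - 1 : ℝ) ≠ 0 := by linarith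
  rw [spikeEraLen, ← logb_div (by positivity) (div_ne_zero h (by positivity))]
  congr 1
  field_simp
  ring

theorem tendsto_inv_natCast_mul_add_two_atTop :
    Tendsto (fun n : ℕ ↦ ((n : ℝ) * (n + 2))⁻¹) atTop (𝓝 0) :=
  tendsto_inv_atTop_zero.comp <| tendsto_natCast_atTop_atTop.atTop_mul_atTop₀ <|
    tendsto_atTop_add_const_right _ _ tendsto_natCast_atTop_atTop

theorem four_div_isEquivalent_inv_mul_add_two :
    (fun n : ℕ ↦ 4 / ((2 * n - 1) * (2 * n + 3) : ℝ)) ~[atTop]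
      fun n : ℕ ↦ ((n : ℝ) * (n + 2))⁻¹ := by
  refine isEquivalent_of_tendsto_one ?_
  simp only [Pi.div_def]
  -- the quotient, with numerator and denominator divided by `n²`
  have h := tendsto_one_div_atTop_nhds_zero_nat (𝕜 := ℝ)
  have hlim : Tendsto (fun n : ℕ ↦ (4 + 8 * (1 / n : ℝ)) / ((2 - 1 / n) * (2 + 3 * (1 / n))))
      atTop (𝓝 ((4 + 8 * 0) / ((2 - 0) * (2 + 3 * 0)))) :=
    ((h.const_mul 8).const_add 4).div ((tendsto_const_nhds.sub h).mul ((h.const_mul 3).const_add 2))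
      (by norm_num)
  norm_num at hlim
  refine hlim.congr' ?_
  filter_upwards [eventually_ge_atTop 1] with n hn
  have hn : (1 : ℝ) ≤ n := by exact_mod_cast hn
  have h : (2 * n - 1 : ℝ) ≠ 0 := by linarith
  field_simp
  ring

theorem khinchin_isEquivalent :
    khinchin ~[atTop] fun n ↦ ((n : ℝ) * (n + 2))⁻¹ / log 2 := by
  refine (tendsto_inv_natCast_mul_add_two_atTop.isEquivalent_logb_one_add 2).congr_left ?_
  filter_upwards [eventually_ne_atTop 0] with n hn using (khinchin_eq_logb hn).symm

theorem spikeEraLen_isEquivalent :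
    spikeEraLen ~[atTop] fun n ↦ ((n : ℝ) * (n + 2))⁻¹ / log 3 := by
  have hu := four_div_isEquivalent_inv_mul_add_two
  have hlog :=
    (hu.symm.tendsto_nhds tendsto_inv_natCast_mul_add_two_atTop).isEquivalent_logb_one_add 3
  refine (hlog.congr_left ?_).trans (hu.div IsEquivalent.refl)
  filter_upwards [eventually_ne_atTop 0] with n hn using (spikeEraLen_eq_logb hn).symm

/-- `lim_{n→∞} L(n)/K(n) = log 2 / log 3`. -/
theorem spikeEraLen_div_khinchin_tendsto :
    Tendsto (fun n : ℕ => spikeEraLen n / khinchin n) atTop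
      (nhds (Real.log 2 / Real.log 3)) := by
  refine (spikeEraLen_isEquivalent.div khinchin_isEquivalent).symm.tendsto_nhds <|
    tendsto_const_nhds.congr' ?_
  simp only [Pi.div_def]
  filter_upwards [eventually_ne_atTop 0] with n hn
  have hn : (n : ℝ) ≠ 0 := by exact_mod_cast hn
  have h2 : log 2 ≠ 0 := by positivity
  have h3 : log 3 ≠ 0 := by positivity
  field_simp
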